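/- Let K be a field of characteristic 0, let Q ∈ K[x] be a nonzero polynomial, let α be a natural number, let f ∈ K[[y]] be a formal power series, and let S ∈ 𝓔_α(Q) have zero constant term (S(0) = 0). Then the composition f(S) (substitution of S into f), which is a well-defined element of K(x)[[y]], belongs to 𝓔_α(Q). -/

import Mathlib

open Polynomial PowerSeries

/-- `𝓔_α(Q)`: the set of power series in `K(x)[[y]]` of the form
`Σ_n c_n(x) yⁿ / Q(x)ⁿ` with `deg c_n ≤ n·α`. -/
def Ecal (K : Type*) [Field K] (α : ℕ) (Q : Polynomial K) :
    Set (PowerSeries (RatFunc K)) :=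
  {A | ∃ c : ℕ → Polynomial K, (∀ n, (c n).natDegree ≤ n * α) ∧
    ∀ n, PowerSeries.coeff (R := RatFunc K) n A =
      algebraMap (Polynomial K) (RatFunc K) (c n) /
        (algebraMap (Polynomial K) (RatFunc K) Q) ^ n}

/-- Composition (substitution) `f(S)` of power series; this gives the usual
composition whenever `S` has zero constant term. -/
noncomputable def PowerSeries.comp {R : Type*} [CommSemiring R]
    (f S : PowerSeries R) : PowerSeries R :=
  PowerSeries.mk fun k =>
    ∑ n ∈ Finset.range (k + 1), PowerSeries.coeff (R := R) n f * PowerSeries.coeff (R := R) k (S ^ n)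

/-! Since `(c / Qⁱ) (d / Qʲ) = c d / Qⁱ⁺ʲ` and degrees add, `𝓔_α(Q)` is closed under
products, so it contains every power `Sⁿ`. The `k`-th coefficient of `f(S)` is the finite
`K`-linear combination `Σ_{n ≤ k} fₙ [yᵏ] Sⁿ` of elements `cₙₖ / Qᵏ` with `deg cₙₖ ≤ k α`. -/

lemma one_mem_Ecal (K : Type*) [Field K] (α : ℕ) (Q : Polynomial K) :
    (1 : PowerSeries (RatFunc K)) ∈ Ecal K α Q := by
  refine ⟨fun n => if n = 0 then 1 else 0, fun n => ?_, fun n => ?_⟩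
  · dsimp only
    split_ifs <;> simp
  · rw [PowerSeries.coeff_one]
    split_ifs with hn <;> simp [hn]

lemma Ecal_mul {K : Type*} [Field K] {α : ℕ} {Q : Polynomial K}
    {A B : PowerSeries (RatFunc K)} (hA : A ∈ Ecal K α Q) (hB : B ∈ Ecal K α Q) :
    A * B ∈ Ecal K α Q := by
  obtain ⟨c, hc, hcA⟩ := hA
  obtain ⟨d, hd, hdB⟩ := hB
  refine ⟨fun k => ∑ ij ∈ Finset.HasAntidiagonal.antidiagonal k, c ij.1 * d ij.2,
    fun k => ?_, fun k => ?_⟩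
  · refine natDegree_sum_le_of_forall_le _ _ fun ij hij => ?_
    rw [Finset.HasAntidiagonal.mem_antidiagonal] at hij
    calc (c ij.1 * d ij.2).natDegree ≤ (c ij.1).natDegree + (d ij.2).natDegree :=
          natDegree_mul_le
      _ ≤ ij.1 * α + ij.2 * α := add_le_add (hc _) (hd _)
      _ = k * α := by rw [← add_mul, hij]
  · rw [PowerSeries.coeff_mul, map_sum, Finset.sum_div]
    refine Finset.sum_congr rfl fun ij hij => ?_
    rw [Finset.HasAntidiagonal.mem_antidiagonal] at hij
    rw [hcA, hdB, div_mul_div_comm, map_mul, ← pow_add, hij]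

lemma Ecal_pow {K : Type*} [Field K] {α : ℕ} {Q : Polynomial K}
    {S : PowerSeries (RatFunc K)} (hS : S ∈ Ecal K α Q) (n : ℕ) :
    S ^ n ∈ Ecal K α Q := by
  induction n with
  | zero => exact one_mem_Ecal K α Q
  | succ n ih => exact pow_succ S n ▸ Ecal_mul ih hS

theorem Ecal_comp_general (K : Type*) [Field K]
    (Q : Polynomial K) (α : ℕ)
    (f : PowerSeries K) (S : PowerSeries (RatFunc K))
    (hS : S ∈ Ecal K α Q) :
    PowerSeries.comp (PowerSeries.map (algebraMap K (RatFunc K)) f) S ∈ Ecal K α Q := by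
  choose d hd hdS using fun n => Ecal_pow hS n
  refine ⟨fun k => ∑ n ∈ Finset.range (k + 1), Polynomial.C (coeff n f) * d n k,
    fun k => ?_, fun k => ?_⟩
  · refine natDegree_sum_le_of_forall_le _ _ fun n _ => ?_
    exact (natDegree_C_mul_le _ _).trans (hd n k)
  · rw [PowerSeries.comp, coeff_mk, map_sum, Finset.sum_div]
    refine Finset.sum_congr rfl fun n _ => ?_
    rw [PowerSeries.coeff_map, hdS n k, map_mul, RatFunc.algebraMap_C, ← RatFunc.algebraMap_eq_C,
      mul_div_assoc]

theorem Ecal_comp (K : Type*) [Field K] [CharZero K]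
    (Q : Polynomial K) (hQ : Q ≠ 0) (α : ℕ)
    (f : PowerSeries K) (S : PowerSeries (RatFunc K))
    (hS : S ∈ Ecal K α Q) (hS0 : PowerSeries.constantCoeff (R := RatFunc K) S = 0) :
    PowerSeries.comp (PowerSeries.map (algebraMap K (RatFunc K)) f) S ∈ Ecal K α Q :=
  Ecal_comp_general K Q α f S hS
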